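/- arXiv:2004.11599 — 3 statements merged into one kernel-verified Lean document; each statement's English description precedes it below -/
import Mathlib

section
/- Let f be an analytic vector field on a nonempty open connected set U* ⊆ ℂⁿ, and let h₁,…,h_r ∈ 𝒞_{U*}(f) be elements of the centralizer of f that are linearly independent over ℂ but linearly dependent over the field 𝕃 of meromorphic functions on U*. Then the differential equation ẋ = f(x) admits a nonconstant meromorphic first integral on U*. In particular, f admits a nonconstant meromorphic first integral whenever dim_ℂ 𝒞_{U*}(f) > n. -/
open Finset

/-- Analytic vector fields: maps `ℂⁿ → ℂⁿ`. -/
abbrev VFa (n : ℕ) := (Fin n → ℂ) → (Fin n → ℂ)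

/-- Lie bracket `[g,h](x) = Dh(x)g(x) − Dg(x)h(x)`. -/
noncomputable def abr {n : ℕ} (g h : VFa n) : VFa n :=
  fun x => fderiv ℂ h x (g x) - fderiv ℂ g x (h x)

/-- `μ` is meromorphic on `U`: locally on `U` it is expressible as a quotient
of analytic functions (on the complement of the zero set of the denominator). -/
def MeromOnC {n : ℕ} (U : Set (Fin n → ℂ)) (μ : (Fin n → ℂ) → ℂ) : Prop :=
  ∀ y ∈ U, ∃ V : Set (Fin n → ℂ), IsOpen V ∧ y ∈ V ∧ V ⊆ U ∧
    ∃ a b : (Fin n → ℂ) → ℂ, AnalyticOnNhd ℂ a V ∧ AnalyticOnNhd ℂ b V ∧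
      (∃ z ∈ V, b z ≠ 0) ∧ ∀ z ∈ V, b z ≠ 0 → μ z = a z / b z

/-- `μ` is a nonzero element of the field of meromorphic functions on `U`:
it is nonvanishing on some nonempty open subset of `U`. -/
def MeromNonzero {n : ℕ} (U : Set (Fin n → ℂ)) (μ : (Fin n → ℂ) → ℂ) : Prop :=
  ∃ W : Set (Fin n → ℂ), IsOpen W ∧ W.Nonempty ∧ W ⊆ U ∧ ∀ z ∈ W, μ z ≠ 0

/-- `D` is a dense subset of `U`. -/
def DenseIn {n : ℕ} (U D : Set (Fin n → ℂ)) : Prop :=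
  D ⊆ U ∧ U ⊆ closure D

/-- The vector fields `h₁,…,h_r` are linearly dependent over the field `𝕃` of
meromorphic functions on `U`: there are meromorphic coefficients `μ_i`, not all
zero in `𝕃`, with `Σ μ_i h_i = 0` (as meromorphic vector fields, i.e. on a
dense subset of `U`). -/
def LinDepMerom {n r : ℕ} (U : Set (Fin n → ℂ)) (h : Fin r → VFa n) : Prop :=
  ∃ μ : Fin r → ((Fin n → ℂ) → ℂ),
    (∀ i, MeromOnC U (μ i)) ∧
    (∃ i, MeromNonzero U (μ i)) ∧
    ∃ D : Set (Fin n → ℂ), DenseIn U D ∧ ∀ z ∈ D, (∑ i, μ i z • h i z) = 0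

/-- `f` admits a nonconstant meromorphic first integral on `U`: a meromorphic
function `φ` that is analytic and nonconstant on a dense open subset `D ⊆ U`,
with `Dφ(z)f(z) = 0` on `D`. -/
def NonconstMeromFirstIntegral {n : ℕ} (U : Set (Fin n → ℂ))
    (f : VFa n) : Prop :=
  ∃ φ : (Fin n → ℂ) → ℂ, MeromOnC U φ ∧
    ∃ D : Set (Fin n → ℂ), IsOpen D ∧ DenseIn U D ∧
      AnalyticOnNhd ℂ φ D ∧
      (∀ z ∈ D, fderiv ℂ φ z (f z) = 0) ∧
      ∃ z ∈ D, ∃ w ∈ D, φ z ≠ φ w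

/-!
Drop fields from the end of the family as long as the remaining ones are linearly dependent at
every point of U (all maximal minors vanish). This leaves h₀, …, h_k, dependent everywhere, with a
k × k minor δ of h₀, …, h_{k-1}, taken on some coordinates ρ, not identically zero. The first-row
cofactors cₘ of the (k + 1) × (k + 1) matrix whose other rows are the ρ-coordinates of h₀, …, h_k
are analytic, c_k = ±δ, and Σ cₘ hₘ = 0, because inserting any coordinate row of the hₘ produces a
vanishing maximal minor. Differentiating along f and using [hₘ, f] = 0 gives Σ X_f(cₘ) hₘ = 0.
Where δ ≠ 0 a relation among the hₘ(x) is determined by its last coefficient, so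
X_f(cₘ) c_k = cₘ X_f(c_k), i.e. X_f(cₘ / c_k) = 0; and these quotients are not all constant, since
constant coefficients would give a relation over ℂ. Dependence over 𝕃, as well as having n + 1
fields on ℂⁿ, makes all maximal minors vanish.
-/

open Filter

section Cofactor

variable {R : Type*} [CommRing R] {n k : ℕ}

theorem linearIndependent_of_det_ne_zero [IsDomain R] {ι : Type*} [Fintype ι] [DecidableEq ι]
    {v : ι → Fin n → R} {ρ : ι → Fin n} (h : (Matrix.of fun l i => v i (ρ l)).det ≠ 0) :
    LinearIndependent R v :=
  (Matrix.linearIndependent_cols_of_det_ne_zero h).of_comp (LinearMap.funLeft R R ρ)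

def cofactor (ρ : Fin k → Fin n) (v : Fin (k + 1) → Fin n → R) (m : Fin (k + 1)) : R :=
  (-1) ^ (m : ℕ) * (Matrix.of fun l i => v (m.succAbove i) (ρ l)).det

theorem det_cons_eq_sum_mul_cofactor (ρ : Fin k → Fin n) (v : Fin (k + 1) → Fin n → R)
    (w : Fin (k + 1) → R) :
    (Matrix.of (Fin.cons w fun l i => v i (ρ l))).det = ∑ m, w m * cofactor ρ v m := by
  rw [Matrix.det_succ_row_zero]
  refine sum_congr rfl fun m _ => ?_
  simp only [cofactor, Matrix.of_apply, Fin.cons_zero, Fin.cons_succ, Matrix.submatrix]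
  ring

theorem sum_cofactor_smul_eq_zero (ρ : Fin k → Fin n) (v : Fin (k + 1) → Fin n → R)
    (hv : ∀ p, (Matrix.of fun l i => v i ((Fin.cons p ρ : Fin (k + 1) → Fin n) l)).det = 0) :
    ∑ m, cofactor ρ v m • v m = 0 := by
  ext p
  have hrows : (Matrix.of fun l i => v i ((Fin.cons p ρ : Fin (k + 1) → Fin n) l))
      = Matrix.of (Fin.cons (fun i => v i p) fun l i => v i (ρ l)) := by
    ext l i
    cases l using Fin.cases <;> simp
  have hp := hv p
  rw [hrows, det_cons_eq_sum_mul_cofactor] at hp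
  simpa [mul_comm] using hp

theorem cofactor_last (ρ : Fin k → Fin n) (v : Fin (k + 1) → Fin n → R) :
    cofactor ρ v (Fin.last k) = (-1) ^ k * (Matrix.of fun l i => v i.castSucc (ρ l)).det := by
  simp [cofactor]

theorem eq_zero_of_sum_smul_eq_zero_of_last {M : Type*} [AddCommGroup M] [Module R M]
    {v : Fin (k + 1) → M} (hv : LinearIndependent R fun i : Fin k => v i.castSucc)
    {d : Fin (k + 1) → R} (hd : ∑ m, d m • v m = 0) (hlast : d (Fin.last k) = 0) : d = 0 := by
  rw [Fin.sum_univ_castSucc, hlast, zero_smul, add_zero] at hd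
  have hcast := Fintype.linearIndependent_iff.mp hv _ hd
  ext m
  cases m using Fin.lastCases <;> simp [*]

end Cofactor

section Analytic

variable {𝕜 E : Type*} [NontriviallyNormedField 𝕜] [NormedAddCommGroup E] [NormedSpace 𝕜 E]

theorem AnalyticOnNhd.det {ι : Type*} [Fintype ι] [DecidableEq ι] {s : Set E}
    {g : E → Matrix ι ι 𝕜} (hg : ∀ i j, AnalyticOnNhd 𝕜 (fun z => g z i j) s) :
    AnalyticOnNhd 𝕜 (fun z => (g z).det) s := by
  simp only [Matrix.det_apply']
  exact Finset.analyticOnNhd_fun_sum _ fun σ _ =>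
    analyticOnNhd_const.mul (Finset.analyticOnNhd_fun_prod _ fun i _ => hg (σ i) i)

theorem fderiv_div_apply {c d : E → 𝕜} {x : E} (hc : DifferentiableAt 𝕜 c x)
    (hd : DifferentiableAt 𝕜 d x) (hx : d x ≠ 0) (v : E) :
    fderiv 𝕜 (fun y => c y / d y) x v
      = (fderiv 𝕜 c x v * d x - c x * fderiv 𝕜 d x v) / d x ^ 2 := by
  have hinv : HasFDerivAt (fun y => (d y)⁻¹) _ x := (hasFDerivAt_inv hx).comp x hd.hasFDerivAt
  simp only [div_eq_mul_inv]
  rw [(hc.hasFDerivAt.fun_mul hinv).fderiv]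
  simp only [add_apply, smul_apply, ContinuousLinearMap.comp_apply,
    ContinuousLinearMap.toSpanSingleton_apply, smul_eq_mul]
  field_simp
  ring

theorem AnalyticOnNhd.eqOn_zero_of_eqOn_zero_inter {U W D : Set E} {g : E → 𝕜}
    (hg : AnalyticOnNhd 𝕜 g U) (hU : IsPreconnected U) (hWo : IsOpen W) (hW : W.Nonempty)
    (hWU : W ⊆ U) (hD : U ⊆ closure D) (hgD : Set.EqOn g 0 (W ∩ D)) : Set.EqOn g 0 U := by
  have hgW : Set.EqOn g 0 W := hgD.of_subset_closure (hg.continuousOn.mono hWU)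
    continuousOn_const Set.inter_subset_left
    fun w hw => hWo.inter_closure ⟨hw, hD (hWU hw)⟩
  obtain ⟨w, hw⟩ := hW
  exact hg.eqOn_zero_of_preconnected_of_eventuallyEq_zero hU (hWU hw)
    (eventuallyEq_of_mem (hWo.mem_nhds hw) hgW)

end Analytic

section VectorField

variable {n : ℕ} {U : Set (Fin n → ℂ)}

theorem denseIn_setOf_ne_zero {g : (Fin n → ℂ) → ℂ} (hg : AnalyticOnNhd ℂ g U) (hUo : IsOpen U)
    (hU : IsPreconnected U) {z₀ : Fin n → ℂ} (hz₀ : z₀ ∈ U) (hgz₀ : g z₀ ≠ 0) :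
    DenseIn U {z | z ∈ U ∧ g z ≠ 0} := by
  refine ⟨fun z hz => hz.1, fun y hy => ?_⟩
  by_contra hyc
  refine hgz₀ (hg.eqOn_zero_of_preconnected_of_eventuallyEq_zero hU hy ?_ hz₀)
  filter_upwards [hUo.mem_nhds hy, isClosed_closure.isOpen_compl.mem_nhds hyc] with w hwU hw
  by_contra hne
  exact hw (subset_closure ⟨hwU, hne⟩)

theorem analyticOnNhd_det_coord {ι : Type*} [Fintype ι] [DecidableEq ι] {v : ι → VFa n}
    (hv : ∀ i, AnalyticOnNhd ℂ (v i) U) (ρ : ι → Fin n) :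
    AnalyticOnNhd ℂ (fun x => (Matrix.of fun l i => v i x (ρ l)).det) U :=
  AnalyticOnNhd.det fun l i => analyticOnNhd_pi_iff.mp (hv i) (ρ l)

theorem sum_fderiv_apply_smul_eq_zero {ι : Type*} [Fintype ι] (hUo : IsOpen U) {f : VFa n}
    {h : ι → VFa n} {c : ι → (Fin n → ℂ) → ℂ} (hh : ∀ i, DifferentiableOn ℂ (h i) U)
    (hbr : ∀ i, ∀ x ∈ U, abr (h i) f x = 0) (hc : ∀ i, DifferentiableOn ℂ (c i) U)
    (hrel : ∀ x ∈ U, ∑ i, c i x • h i x = 0) :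
    ∀ x ∈ U, ∑ i, fderiv ℂ (c i) x (f x) • h i x = 0 := by
  intro x hx
  have hF : HasFDerivAt (fun y => ∑ i, c i y • h i y)
      (∑ i, (c i x • fderiv ℂ (h i) x + (fderiv ℂ (c i) x).smulRight (h i x))) x :=
    HasFDerivAt.fun_sum fun i _ => ((hc i).differentiableAt (hUo.mem_nhds hx)).hasFDerivAt.smul
      ((hh i).differentiableAt (hUo.mem_nhds hx)).hasFDerivAt
  have hF0 := hF.unique ((hasFDerivAt_const 0 x).congr_of_eventuallyEq
    (eventuallyEq_of_mem (hUo.mem_nhds hx) hrel))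
  have hbr' : ∀ i, fderiv ℂ (h i) x (f x) = fderiv ℂ f x (h i x) :=
    fun i => (sub_eq_zero.mp (hbr i x hx)).symm
  -- `Dhᵢ(f) = Df(hᵢ)` turns `Σ cᵢ Dhᵢ(f)` into `Df(Σ cᵢ hᵢ) = 0`.
  calc ∑ i, fderiv ℂ (c i) x (f x) • h i x
      = (∑ i, (c i x • fderiv ℂ (h i) x + (fderiv ℂ (c i) x).smulRight (h i x))) (f x)
        - fderiv ℂ f x (∑ i, c i x • h i x) := by
        simp [hbr', map_sum, map_smul, sum_add_distrib]
    _ = 0 := by rw [hF0, hrel x hx]; simp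

theorem nonconstMeromFirstIntegral_of_relation {ι : Type*} [Fintype ι] (hUo : IsOpen U)
    (hU : IsPreconnected U) {f : VFa n} {h : ι → VFa n} (hh : ∀ i, AnalyticOnNhd ℂ (h i) U)
    (hbr : ∀ i, ∀ x ∈ U, abr (h i) f x = 0)
    (hind : ∀ κ : ι → ℂ, (∀ x ∈ U, ∑ i, κ i • h i x = 0) → κ = 0)
    {c : ι → (Fin n → ℂ) → ℂ} (hc : ∀ i, AnalyticOnNhd ℂ (c i) U)
    (hrel : ∀ x ∈ U, ∑ i, c i x • h i x = 0) {j : ι} {z₀ : Fin n → ℂ} (hz₀ : z₀ ∈ U)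
    (hcj : c j z₀ ≠ 0)
    (huniq : ∀ x ∈ U, c j x ≠ 0 → ∀ d : ι → ℂ, ∑ i, d i • h i x = 0 → d j = 0 → d = 0) :
    NonconstMeromFirstIntegral U f := by
  set D := {z | z ∈ U ∧ c j z ≠ 0}
  have hDo : IsOpen D := (hc j).continuousOn.isOpen_inter_preimage hUo isOpen_compl_singleton
  have hrel' := sum_fderiv_apply_smul_eq_zero hUo (fun i => (hh i).differentiableOn) hbr
    (fun i => (hc i).differentiableOn) hrel
  have hX : ∀ x ∈ D, ∀ i, fderiv ℂ (fun y => c i y / c j y) x (f x) = 0 := by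
    rintro x ⟨hx, hcjx⟩ i
    set X : ι → ℂ := fun i => fderiv ℂ (c i) x (f x)
    have hd := huniq x hx hcjx (fun i => X i * c j x - c i x * X j) ?_ (by ring)
    · rw [fderiv_div_apply (hc i x hx).differentiableAt (hc j x hx).differentiableAt hcjx,
        congrFun hd i, Pi.zero_apply, zero_div]
    · calc ∑ i, (X i * c j x - c i x * X j) • h i x
          = c j x • ∑ i, X i • h i x - X j • ∑ i, c i x • h i x := by
            simp only [sub_smul, mul_smul, smul_sum, sum_sub_distrib, smul_comm (c j x),
              mul_comm (c _ x) (X j)]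
        _ = 0 := by rw [hrel x hx, hrel' x hx, smul_zero, smul_zero, sub_zero]
  obtain ⟨i, x, hxD, y, hyD, hne⟩ : ∃ i, ∃ x ∈ D, ∃ y ∈ D, c i x / c j x ≠ c i y / c j y := by
    by_contra! hconst
    set κ : ι → ℂ := fun i => c i z₀ / c j z₀
    have hκD : ∀ y ∈ D, ∑ i, κ i • h i y = 0 := fun y hy => by
      simp only [κ, hconst _ z₀ ⟨hz₀, hcj⟩ y hy, div_eq_inv_mul, mul_smul, ← smul_sum,
        hrel y hy.1, smul_zero]
    have hκU : ∀ x ∈ U, ∑ i, κ i • h i x = 0 := fun x hx =>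
      (Finset.analyticOnNhd_fun_sum _ fun i _ => analyticOnNhd_const.smul (hh i)
        ).eqOn_zero_of_preconnected_of_eventuallyEq_zero hU hz₀
        (eventuallyEq_of_mem (hDo.mem_nhds ⟨hz₀, hcj⟩) hκD) hx
    simpa [κ, hcj] using congrFun (hind κ hκU) j
  exact ⟨fun z => c i z / c j z,
    fun y hy => ⟨U, hUo, hy, subset_rfl, c i, c j, hc i, hc j, ⟨z₀, hz₀, hcj⟩, fun _ _ _ => rfl⟩,
    D, hDo, denseIn_setOf_ne_zero (hc j) hUo hU hz₀ hcj,
    fun x hx => (hc i x hx.1).div (hc j x hx.1) hx.2, fun x hx => hX x hx i, x, hxD, y, hyD, hne⟩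

theorem nonconstMeromFirstIntegral_of_det_eq_zero (hUo : IsOpen U) (hU : IsConnected U)
    {f : VFa n} (r : ℕ) {h : Fin r → VFa n} (hh : ∀ i, AnalyticOnNhd ℂ (h i) U)
    (hbr : ∀ i, ∀ x ∈ U, abr (h i) f x = 0)
    (hind : ∀ κ : Fin r → ℂ, (∀ x ∈ U, ∑ i, κ i • h i x = 0) → κ = 0)
    (hdet : ∀ ρ : Fin r → Fin n, ∀ x ∈ U, (Matrix.of fun l i => h i x (ρ l)).det = 0) :
    NonconstMeromFirstIntegral U f := by
  induction r with
  | zero =>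
    obtain ⟨x, hx⟩ := hU.nonempty
    simpa using hdet Fin.elim0 x hx
  | succ k ih =>
    by_cases hsub : ∀ ρ : Fin k → Fin n, ∀ x ∈ U,
        (Matrix.of fun l i => h i.castSucc x (ρ l)).det = 0
    · have hind' : ∀ κ : Fin k → ℂ, (∀ x ∈ U, ∑ i, κ i • h i.castSucc x = 0) → κ = 0 := by
        intro κ hκ
        have hsnoc := hind (Fin.snoc κ 0) fun x hx => by
          simpa [Fin.sum_univ_castSucc] using hκ x hx
        ext i
        simpa using congrFun hsnoc i.castSucc
      exact ih (fun i => hh _) (fun i => hbr _) hind' hsub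
    · push Not at hsub
      obtain ⟨ρ, z₀, hz₀, hδ⟩ := hsub
      refine nonconstMeromFirstIntegral_of_relation hUo hU.isPreconnected hh hbr hind
        (c := fun m x => cofactor ρ (fun i => h i x) m) (j := Fin.last k)
        (fun m => analyticOnNhd_const.mul (analyticOnNhd_det_coord (fun i => hh _) ρ))
        (fun x hx => sum_cofactor_smul_eq_zero ρ _ fun p => hdet _ x hx) hz₀
        (by simpa [cofactor_last] using hδ) fun x _ hx d hd hlast => ?_
      rw [cofactor_last, mul_ne_zero_iff] at hx
      exact eq_zero_of_sum_smul_eq_zero_of_last (v := fun i => h i x)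
        (linearIndependent_of_det_ne_zero hx.2) hd hlast

theorem LinDepMerom.det_eq_zero {r : ℕ} (hU : IsPreconnected U) {h : Fin r → VFa n}
    (hh : ∀ i, AnalyticOnNhd ℂ (h i) U) (hdep : LinDepMerom U h) (ρ : Fin r → Fin n) :
    ∀ x ∈ U, (Matrix.of fun l i => h i x (ρ l)).det = 0 := by
  obtain ⟨μ, -, ⟨i₀, W, hWo, hW, hWU, hμ⟩, D, ⟨-, hD⟩, hrel⟩ := hdep
  refine (analyticOnNhd_det_coord hh ρ).eqOn_zero_of_eqOn_zero_inter hU hWo hW hWU hD ?_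
  rintro x ⟨hxW, hxD⟩
  by_contra hne
  have hli : LinearIndependent ℂ fun i => h i x := linearIndependent_of_det_ne_zero (ρ := ρ) hne
  exact hμ x hxW (Fintype.linearIndependent_iff.mp hli _ (hrel x hxD) i₀)

end VectorField

theorem stmt_1_general {n : ℕ} (U : Set (Fin n → ℂ)) (hUo : IsOpen U)
    (hUc : IsConnected U)
    (f : VFa n) :
    (∀ (r : ℕ) (h : Fin r → VFa n),
      (∀ i, AnalyticOnNhd ℂ (h i) U) →
      (∀ i, ∀ x ∈ U, abr (h i) f x = 0) →
      (∀ c : Fin r → ℂ, (∀ x ∈ U, (∑ i, c i • h i x) = 0) → c = 0) →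
      LinDepMerom U h →
      NonconstMeromFirstIntegral U f) ∧
    (∀ h : Fin (n + 1) → VFa n,
      (∀ i, AnalyticOnNhd ℂ (h i) U) →
      (∀ i, ∀ x ∈ U, abr (h i) f x = 0) →
      (∀ c : Fin (n + 1) → ℂ, (∀ x ∈ U, (∑ i, c i • h i x) = 0) → c = 0) →
      NonconstMeromFirstIntegral U f) := by
  refine ⟨fun r h hh hbr hind hdep => ?_, fun h hh hbr hind => ?_⟩
  · exact nonconstMeromFirstIntegral_of_det_eq_zero hUo hUc r hh hbr hind
      fun ρ => hdep.det_eq_zero hUc.isPreconnected hh ρ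
  · refine nonconstMeromFirstIntegral_of_det_eq_zero hUo hUc (n + 1) hh hbr hind fun ρ x _ => ?_
    by_contra hne
    simpa using (linearIndependent_of_det_ne_zero hne).fintype_card_le_finrank

/-- If `h₁,…,h_r` are centralizer elements of `f` on the
nonempty open connected set `U`, linearly independent over ℂ but linearly
dependent over the field of meromorphic functions, then `f` admits a nonconstant
meromorphic first integral on `U`. In particular this holds whenever the
centralizer contains `n+1` elements that are linearly independent over ℂ. -/
theorem stmt_1 {n : ℕ} (U : Set (Fin n → ℂ)) (hUo : IsOpen U)
    (hUc : IsConnected U)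
    (f : VFa n) (hf : AnalyticOnNhd ℂ f U) :
    (∀ (r : ℕ) (h : Fin r → VFa n),
      (∀ i, AnalyticOnNhd ℂ (h i) U) →
      (∀ i, ∀ x ∈ U, abr (h i) f x = 0) →
      (∀ c : Fin r → ℂ, (∀ x ∈ U, (∑ i, c i • h i x) = 0) → c = 0) →
      LinDepMerom U h →
      NonconstMeromFirstIntegral U f) ∧
    (∀ h : Fin (n + 1) → VFa n,
      (∀ i, AnalyticOnNhd ℂ (h i) U) →
      (∀ i, ∀ x ∈ U, abr (h i) f x = 0) →
      (∀ c : Fin (n + 1) → ℂ, (∀ x ∈ U, (∑ i, c i • h i x) = 0) → c = 0) →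
      NonconstMeromFirstIntegral U f) :=
  stmt_1_general U hUo hUc f
end

section
/- Let ℓ₁,…,ℓ_n be pairwise relatively prime integers, all ℓ_i > 1, L := ℓ₁⋯ℓ_n, and ε₁,…,ε_n ∈ {1,−1}. Set B := diag(ε₁L/ℓ₁,…,ε_nL/ℓ_n). Then: (a) the I(B)-module 𝒞^pol(B) of polynomial vector fields commuting with B is free, generated by Q_j(x) = x_je_j, 1 ≤ j ≤ n; (b) if ε_n = −1 and all other ε_i = 1, then the algebra I(B) of polynomial first integrals admits the algebraically independent generator set φ₁(x) = x₁^{ℓ₁}x_n^{ℓ_n}, …, φ_{n−1}(x) = x_{n−1}^{ℓ_{n−1}}x_n^{ℓ_n}. -/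
/-!
For `B = diag b` the operator `X_B` multiplies a monomial `x ^ d` by its weight `∑ d_j b_j`,
so first integrals are the polynomials that are weighted homogeneous of degree `0`, and
`[B, g] = 0` says that each `g_i` is weighted homogeneous of degree `b_i`. For
`b_i = ε_i L / ℓ_i`, reducing a weight modulo `ℓ_i` kills every term but the `i`-th, whose
coefficient is prime to `ℓ_i`. Hence a monomial of weight `b_i` contains `x_i`, which makes
`g_i / x_i` a first integral; and a monomial of weight `0` has `ℓ_i ∣ d_i` for all `i`, hence is
a product of the `φ_i`. The exponent vectors of the `φ_i` are linearly independent over `ℕ`, so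
distinct monomials in the `φ_i` are distinct monomials in `x`, which gives algebraic
independence.
-/

open Finset

/-- Polynomial vector fields on ℂⁿ. -/
abbrev PVF (n : ℕ) := Fin n → MvPolynomial (Fin n) ℂ

/-- Lie derivative `X_g(φ) = Dφ·g`. -/
noncomputable def lieDP {n : ℕ} (g : PVF n) (φ : MvPolynomial (Fin n) ℂ) :
    MvPolynomial (Fin n) ℂ :=
  ∑ j, g j * MvPolynomial.pderiv j φ

/-- Lie bracket `[g,h] = Dh·g − Dg·h`. -/
noncomputable def pbr {n : ℕ} (g h : PVF n) : PVF n :=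
  fun i => lieDP g (h i) - lieDP h (g i)

/-- The linear vector field `x ↦ Bx`. -/
noncomputable def linVFP {n : ℕ} (B : Matrix (Fin n) (Fin n) ℂ) : PVF n :=
  fun i => ∑ j, MvPolynomial.C (B i j) * MvPolynomial.X j

/-- The vector field `Q_j(x) = x_j e_j`. -/
noncomputable def Qvf {n : ℕ} (j : Fin n) : PVF n :=
  fun i => if i = j then MvPolynomial.X j else 0

open Function MvPolynomial Finsupp

namespace MvPolynomial

variable {R σ ι : Type*} [CommSemiring R]

theorem IsWeightedHomogeneous.divMonomial {M : Type*} [AddCommGroup M]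
    {w : σ → M} {p : MvPolynomial σ R} {m : M} (hp : IsWeightedHomogeneous w p m)
    (s : σ →₀ ℕ) : IsWeightedHomogeneous w (p.divMonomial s) (m - weight w s) := by
  intro d hd
  rw [coeff_divMonomial] at hd
  rw [← hp hd, map_add, add_sub_cancel_left]

theorem X_mul_divMonomial_single_of_forall {p : MvPolynomial σ R} {i : σ}
    (hp : ∀ d, coeff d p ≠ 0 → d i ≠ 0) : X i * (p.divMonomial (single i 1)) = p := by
  conv_rhs => rw [← divMonomial_add_modMonomial_single p i]
  suffices p.modMonomial (single i 1) = 0 by rw [this, add_zero]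
  ext d
  by_cases hd : single i 1 ≤ d
  · rw [coeff_modMonomial_of_le _ hd, coeff_zero]
  · rw [coeff_modMonomial_of_not_le _ hd, coeff_zero]
    by_contra hne
    exact hd (single_le_iff.2 (Nat.one_le_iff_ne_zero.2 (hp d hne)))

variable (v : ι → σ →₀ ℕ)

theorem aeval_monomial_one_monomial (c : ι →₀ ℕ) (a : R) :
    aeval (fun i => monomial (v i) (1 : R)) (monomial c a) =
      monomial (linearCombination ℕ v c) a := by
  rw [aeval_monomial, linearCombination_apply, monomial_finsupp_sum_index, algebraMap_eq]
  simp only [monomial_pow, one_pow]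

variable {v}

theorem coeff_linearCombination_aeval_monomial_one (hv : Injective (linearCombination ℕ v))
    (p : MvPolynomial ι R) (d : ι →₀ ℕ) :
    coeff (linearCombination ℕ v d) (aeval (fun i => monomial (v i) (1 : R)) p) = coeff d p := by
  classical
  induction p using MvPolynomial.induction_on' with
  | monomial e a => simp only [aeval_monomial_one_monomial, coeff_monomial, hv.eq_iff]
  | add p q hp hq => rw [map_add, coeff_add, coeff_add, hp, hq]

theorem algebraicIndependent_monomial_one {R : Type*} [CommRing R]
    (hv : Injective (linearCombination ℕ v)) :
    AlgebraicIndependent R fun i => monomial (v i) (1 : R) := by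
  rw [algebraicIndependent_iff_injective_aeval]
  intro p q h
  ext d
  rw [← coeff_linearCombination_aeval_monomial_one hv, h,
    coeff_linearCombination_aeval_monomial_one hv]

theorem mem_adjoin_range_monomial_one {p : MvPolynomial σ R}
    (hp : ∀ d, coeff d p ≠ 0 → d ∈ Set.range (linearCombination ℕ v)) :
    p ∈ Algebra.adjoin R (Set.range fun i => monomial (v i) (1 : R)) := by
  rw [p.as_sum]
  refine Subalgebra.sum_mem _ fun d hd => ?_
  obtain ⟨c, rfl⟩ := hp d (MvPolynomial.mem_support_iff.1 hd)
  rw [← aeval_monomial_one_monomial, Algebra.adjoin_range_eq_range_aeval]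
  exact ⟨_, rfl⟩

end MvPolynomial

theorem Finsupp.weight_intCast {σ R : Type*} [Ring R] (w : σ → ℤ) (d : σ →₀ ℕ) :
    weight (fun i => (w i : R)) d = (weight w d : R) := by
  simp [weight_apply, Finsupp.sum]

section DiagonalField

variable {n : ℕ} (b : Fin n → ℂ)

theorem linVFP_diagonal_apply (i : Fin n) : linVFP (Matrix.diagonal b) i = C (b i) * X i := by
  simp [linVFP, Matrix.diagonal_apply, apply_ite C, ite_mul]

theorem lieDP_add (g : PVF n) (p q : MvPolynomial (Fin n) ℂ) :
    lieDP g (p + q) = lieDP g p + lieDP g q := by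
  simp [lieDP, mul_add, sum_add_distrib]

theorem lieDP_C_mul_X (g : PVF n) (c : ℂ) (i : Fin n) : lieDP g (C c * X i) = g i * C c := by
  simp [lieDP, Pi.single_apply]

theorem lieDP_linVFP_diagonal_monomial (d : Fin n →₀ ℕ) (a : ℂ) :
    lieDP (linVFP (Matrix.diagonal b)) (monomial d a) = monomial d (weight b d * a) := by
  simp only [lieDP, linVFP_diagonal_apply, mul_assoc, X_mul_pderiv_monomial, weight_eq_sum]
  rw [Finset.sum_mul, map_sum]
  refine sum_congr rfl fun j _ => ?_
  rw [smul_monomial, C_mul_monomial, nsmul_eq_mul, nsmul_eq_mul, mul_assoc, mul_left_comm]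

theorem coeff_lieDP_linVFP_diagonal (p : MvPolynomial (Fin n) ℂ) (d : Fin n →₀ ℕ) :
    coeff d (lieDP (linVFP (Matrix.diagonal b)) p) = weight b d * coeff d p := by
  induction p using MvPolynomial.induction_on' with
  | monomial e a =>
    rw [lieDP_linVFP_diagonal_monomial, coeff_monomial, coeff_monomial]
    split_ifs with h
    · rw [h]
    · rw [mul_zero]
  | add p q hp hq => rw [lieDP_add, coeff_add, coeff_add, hp, hq, mul_add]

theorem lieDP_linVFP_diagonal_eq_C_mul_iff (p : MvPolynomial (Fin n) ℂ) (c : ℂ) :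
    lieDP (linVFP (Matrix.diagonal b)) p = C c * p ↔ IsWeightedHomogeneous b p c := by
  simp only [MvPolynomial.ext_iff, coeff_lieDP_linVFP_diagonal, coeff_C_mul,
    mul_eq_mul_right_iff, IsWeightedHomogeneous]
  exact forall_congr' fun d => or_iff_not_imp_right

theorem lieDP_linVFP_diagonal_eq_zero_iff (p : MvPolynomial (Fin n) ℂ) :
    lieDP (linVFP (Matrix.diagonal b)) p = 0 ↔ IsWeightedHomogeneous b p 0 := by
  simpa using lieDP_linVFP_diagonal_eq_C_mul_iff b p 0

theorem pbr_linVFP_diagonal_eq_zero_iff (g : PVF n) :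
    pbr (linVFP (Matrix.diagonal b)) g = 0 ↔ ∀ i, IsWeightedHomogeneous b (g i) (b i) := by
  simp only [funext_iff, pbr, Pi.zero_apply, sub_eq_zero, linVFP_diagonal_apply, lieDP_C_mul_X,
    mul_comm (g _), lieDP_linVFP_diagonal_eq_C_mul_iff]

theorem pbr_linVFP_diagonal_Qvf (j : Fin n) : pbr (linVFP (Matrix.diagonal b)) (Qvf j) = 0 := by
  rw [pbr_linVFP_diagonal_eq_zero_iff]
  intro i
  unfold Qvf
  split_ifs with h
  · exact h ▸ isWeightedHomogeneous_X ℂ b j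
  · exact isWeightedHomogeneous_zero ℂ b _

theorem exists_eq_mul_X_of_pbr_linVFP_diagonal_eq_zero
    (hb : ∀ i d, weight b d = b i → d i ≠ 0) {g : PVF n}
    (hg : pbr (linVFP (Matrix.diagonal b)) g = 0) :
    ∃ φ : PVF n, (∀ j, lieDP (linVFP (Matrix.diagonal b)) (φ j) = 0) ∧
      ∀ i, g i = φ i * X i := by
  rw [pbr_linVFP_diagonal_eq_zero_iff] at hg
  refine ⟨fun i => (g i).divMonomial (single i 1), fun j => ?_, fun i => ?_⟩
  · rw [lieDP_linVFP_diagonal_eq_zero_iff]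
    simpa [weight_single] using (hg j).divMonomial (single j 1)
  · rw [mul_comm, X_mul_divMonomial_single_of_forall fun d hd => hb i d (hg i hd)]

end DiagonalField

section Cofactors

variable {ι : Type*} [Fintype ι] (ℓ : ι → ℕ) (ε : ι → ℤ)

theorem dvd_prod_div_of_ne {i j : ι} (h : i ≠ j) : ℓ i ∣ (∏ k, ℓ k) / ℓ j := by
  classical
  apply Nat.dvd_div_of_mul_dvd
  rw [← prod_pair h.symm]
  exact prod_dvd_prod_of_subset _ _ _ (subset_univ _)

theorem coprime_prod_div_self (hcop : Pairwise (Nat.Coprime on ℓ)) {i : ι} (hi : ℓ i ≠ 0) :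
    Nat.Coprime (ℓ i) ((∏ k, ℓ k) / ℓ i) := by
  classical
  rw [← mul_prod_erase _ ℓ (mem_univ i), Nat.mul_div_cancel_left _ (Nat.pos_of_ne_zero hi)]
  exact Nat.Coprime.prod_right fun j hj => hcop (ne_of_mem_erase hj).symm

/-- The diagonal entries of `B`. -/
def cofactorWeight (i : ι) : ℤ := ε i * ((∏ k, ℓ k) / ℓ i : ℕ)

theorem natCast_mul_cofactorWeight (i : ι) :
    (ℓ i : ℤ) * cofactorWeight ℓ ε i = ε i * (∏ k, ℓ k : ℕ) := by
  rw [cofactorWeight, mul_left_comm, ← Nat.cast_mul,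
    Nat.mul_div_cancel' (dvd_prod_of_mem ℓ (mem_univ i))]

variable {ℓ ε}

/-- Modulo `ℓ i` only the `i`-th term of the weight survives, and its coefficient is prime
to `ℓ i`. -/
theorem natCast_dvd_weight_cofactorWeight_iff (hcop : Pairwise (Nat.Coprime on ℓ)) {i : ι}
    (hi : ℓ i ≠ 0) (hε : IsUnit (ε i)) (d : ι →₀ ℕ) :
    (ℓ i : ℤ) ∣ weight (cofactorWeight ℓ ε) d ↔ ℓ i ∣ d i := by
  classical
  have hrest : (ℓ i : ℤ) ∣ ∑ j ∈ univ.erase i, d j • cofactorWeight ℓ ε j :=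
    dvd_sum fun j hj => by
      rw [nsmul_eq_mul, cofactorWeight]
      exact ((Int.natCast_dvd_natCast.2
        (dvd_prod_div_of_ne ℓ (ne_of_mem_erase hj).symm)).mul_left _).mul_left _
  rw [weight_eq_sum, ← Finset.add_sum_erase _ _ (mem_univ i), dvd_add_left hrest, nsmul_eq_mul,
    cofactorWeight, mul_left_comm, hε.dvd_mul_left, ← Nat.cast_mul, Int.natCast_dvd_natCast,
    (coprime_prod_div_self ℓ hcop hi).dvd_mul_right]

theorem ne_zero_of_weight_cofactorWeight_eq (hcop : Pairwise (Nat.Coprime on ℓ)) {i : ι}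
    (hi : 1 < ℓ i) (hε : IsUnit (ε i)) {d : ι →₀ ℕ}
    (hd : weight (cofactorWeight ℓ ε) d = cofactorWeight ℓ ε i) : d i ≠ 0 := by
  intro hdi
  have hi0 : ℓ i ≠ 0 := Nat.ne_zero_of_lt hi
  have hdvd := (natCast_dvd_weight_cofactorWeight_iff hcop hi0 hε d).2 (hdi ▸ dvd_zero _)
  rw [hd, cofactorWeight, hε.dvd_mul_left, Int.natCast_dvd_natCast] at hdvd
  have := (coprime_prod_div_self ℓ hcop hi0).eq_one_of_dvd hdvd
  omega

end Cofactors

section Exponents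

variable {m : ℕ} (ℓ : Fin (m + 1) → ℕ)

/-- The exponent vector of the first integral `φ_i`. -/
noncomputable def integralExponent (i : Fin m) : Fin (m + 1) →₀ ℕ :=
  single i.castSucc (ℓ i.castSucc) + single (Fin.last m) (ℓ (Fin.last m))

theorem monomial_integralExponent (i : Fin m) :
    monomial (integralExponent ℓ i) (1 : ℂ) =
      X i.castSucc ^ ℓ i.castSucc * X (Fin.last m) ^ ℓ (Fin.last m) := by
  rw [integralExponent, X_pow_eq_monomial, X_pow_eq_monomial, monomial_mul, one_mul]

theorem linearCombination_integralExponent_castSucc (c : Fin m →₀ ℕ) (j : Fin m) :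
    linearCombination ℕ (integralExponent ℓ) c j.castSucc = c j * ℓ j.castSucc := by
  rw [linearCombination_apply, Finsupp.sum_fintype _ _ (by simp), finsetSum_apply,
    Finset.sum_eq_single j (fun i _ hij => by simp [integralExponent, hij]) (by simp)]
  simp [integralExponent]

theorem linearCombination_integralExponent_last (c : Fin m →₀ ℕ) :
    linearCombination ℕ (integralExponent ℓ) c (Fin.last m) = (∑ i, c i) * ℓ (Fin.last m) := by
  rw [linearCombination_apply, Finsupp.sum_fintype _ _ (by simp), finsetSum_apply,
    Finset.sum_mul]
  exact sum_congr rfl fun i _ => by simp [integralExponent, (Fin.castSucc_lt_last i).ne]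

theorem linearCombination_integralExponent_injective (hℓ : ∀ i : Fin m, ℓ i.castSucc ≠ 0) :
    Injective (linearCombination ℕ (integralExponent ℓ)) := by
  intro c c' h
  ext j
  have := linearCombination_integralExponent_castSucc ℓ c j
  rw [h, linearCombination_integralExponent_castSucc] at this
  exact (Nat.eq_of_mul_eq_mul_right (Nat.pos_of_ne_zero (hℓ j)) this).symm

variable {ℓ} {ε : Fin (m + 1) → ℤ}

theorem weight_cofactorWeight_integralExponent (hlast : ε (Fin.last m) = -1) {i : Fin m}
    (hi : ε i.castSucc = 1) : weight (cofactorWeight ℓ ε) (integralExponent ℓ i) = 0 := by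
  rw [integralExponent, map_add, weight_single, weight_single, nsmul_eq_mul, nsmul_eq_mul,
    natCast_mul_cofactorWeight, natCast_mul_cofactorWeight, hi, hlast]
  ring

/-- Writing `d_j = c_j ℓ_j`, the weight of `x ^ d` is `L (∑_{i<n} c_i - c_n)`. -/
theorem mem_range_integralExponent_of_weight_eq_zero (hcop : Pairwise (Nat.Coprime on ℓ))
    (hℓ : ∀ i, ℓ i ≠ 0) (hlast : ε (Fin.last m) = -1) (hε : ∀ i : Fin m, ε i.castSucc = 1)
    {d : Fin (m + 1) →₀ ℕ} (hd : weight (cofactorWeight ℓ ε) d = 0) :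
    d ∈ Set.range (linearCombination ℕ (integralExponent ℓ)) := by
  have hunit : ∀ j, IsUnit (ε j) := Fin.lastCases (by simp [hlast]) (by simp [hε])
  have hdvd j : ℓ j ∣ d j :=
    (natCast_dvd_weight_cofactorWeight_iff hcop (hℓ j) (hunit j) d).1 (hd ▸ dvd_zero _)
  have hterm j :
      d j • cofactorWeight ℓ ε j = ((d j / ℓ j : ℕ) : ℤ) * ε j * (∏ k, ℓ k : ℕ) := by
    rw [nsmul_eq_mul, ← Nat.div_mul_cancel (hdvd j), Nat.mul_div_cancel _
      (Nat.pos_of_ne_zero (hℓ j)), Nat.cast_mul, mul_assoc, natCast_mul_cofactorWeight, mul_assoc]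
  have hL : 0 < ∏ k, ℓ k := prod_pos fun k _ => Nat.pos_of_ne_zero (hℓ k)
  have hsum : ∑ i : Fin m, d i.castSucc / ℓ i.castSucc = d (Fin.last m) / ℓ (Fin.last m) := by
    rw [weight_eq_sum, Fin.sum_univ_castSucc] at hd
    simp only [hterm, hε, hlast, mul_one, mul_neg_one, neg_mul, ← Finset.sum_mul,
      ← sub_eq_add_neg, sub_eq_zero] at hd
    exact Nat.eq_of_mul_eq_mul_right hL (by exact_mod_cast hd)
  refine ⟨equivFunOnFinite.symm fun i => d i.castSucc / ℓ i.castSucc, ?_⟩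
  ext j
  induction j using Fin.lastCases with
  | last =>
    rw [linearCombination_integralExponent_last]
    simpa [hsum] using Nat.div_mul_cancel (hdvd _)
  | cast j =>
    rw [linearCombination_integralExponent_castSucc]
    simpa using Nat.div_mul_cancel (hdvd _)

end Exponents

/-- Let `ℓ₁,…,ℓ_n` be pairwise relatively prime integers
`> 1`, `L = ℓ₁⋯ℓ_n`, `ε_i ∈ {1,−1}` and `B = diag(ε₁L/ℓ₁,…,ε_nL/ℓ_n)`. Then
(a) `𝒞^pol(B)` is a free `I(B)`-module generated by the `Q_j`, and
(b) if `ε_n = −1` and all other `ε_i = 1`, then `I(B)` admits the algebraically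
independent generator set `φ_i = x_i^{ℓ_i} x_n^{ℓ_n}`, `1 ≤ i ≤ n−1`. -/
theorem stmt_16 {m : ℕ} (ℓ : Fin (m + 1) → ℕ)
    (hℓ : ∀ i, 1 < ℓ i)
    (hcop : ∀ i j : Fin (m + 1), i ≠ j → Nat.Coprime (ℓ i) (ℓ j))
    (ε : Fin (m + 1) → ℤ) (hε : ∀ i, ε i = 1 ∨ ε i = -1) :
    -- (a) :
    ((∀ j, pbr (linVFP (Matrix.diagonal
        fun i => (ε i : ℂ) * (((∏ k, ℓ k) / ℓ i : ℕ) : ℂ))) (Qvf j) = 0) ∧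
      (∀ g : PVF (m + 1),
        pbr (linVFP (Matrix.diagonal
          fun i => (ε i : ℂ) * (((∏ k, ℓ k) / ℓ i : ℕ) : ℂ))) g = 0 →
        ∃ φ : Fin (m + 1) → MvPolynomial (Fin (m + 1)) ℂ,
          (∀ j, lieDP (linVFP (Matrix.diagonal
            fun i => (ε i : ℂ) * (((∏ k, ℓ k) / ℓ i : ℕ) : ℂ))) (φ j) = 0) ∧
          ∀ i, g i = φ i * MvPolynomial.X i) ∧
      (∀ φ : Fin (m + 1) → MvPolynomial (Fin (m + 1)) ℂ,
        (∀ j, lieDP (linVFP (Matrix.diagonal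
          fun i => (ε i : ℂ) * (((∏ k, ℓ k) / ℓ i : ℕ) : ℂ))) (φ j) = 0) →
        (∀ i, φ i * MvPolynomial.X i = 0) → ∀ i, φ i = 0)) ∧
    -- (b) :
    ((ε (Fin.last m) = -1 ∧ ∀ i : Fin m, ε i.castSucc = 1) →
      (AlgebraicIndependent ℂ (fun i : Fin m =>
        MvPolynomial.X (R := ℂ) i.castSucc ^ ℓ i.castSucc *
        MvPolynomial.X (Fin.last m) ^ ℓ (Fin.last m)) ∧
      (∀ i : Fin m, lieDP (linVFP (Matrix.diagonal
          fun i => (ε i : ℂ) * (((∏ k, ℓ k) / ℓ i : ℕ) : ℂ)))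
        (MvPolynomial.X (R := ℂ) i.castSucc ^ ℓ i.castSucc *
          MvPolynomial.X (Fin.last m) ^ ℓ (Fin.last m)) = 0) ∧
      (∀ ψ : MvPolynomial (Fin (m + 1)) ℂ,
        lieDP (linVFP (Matrix.diagonal
          fun i => (ε i : ℂ) * (((∏ k, ℓ k) / ℓ i : ℕ) : ℂ))) ψ = 0 →
        ψ ∈ Algebra.adjoin ℂ (Set.range (fun i : Fin m =>
          MvPolynomial.X (R := ℂ) i.castSucc ^ ℓ i.castSucc *
          MvPolynomial.X (Fin.last m) ^ ℓ (Fin.last m)))))) := by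
  have hcop' : Pairwise (Nat.Coprime on ℓ) := fun i j h => hcop i j h
  have hℓ0 i : ℓ i ≠ 0 := Nat.ne_zero_of_lt (hℓ i)
  have hb : (fun i => (ε i : ℂ) * (((∏ k, ℓ k) / ℓ i : ℕ) : ℂ)) =
      fun i => (cofactorWeight ℓ ε i : ℂ) := by
    simp only [cofactorWeight, Int.cast_mul, Int.cast_natCast]
  have hφ : (fun i : Fin m => X (R := ℂ) i.castSucc ^ ℓ i.castSucc *
      X (Fin.last m) ^ ℓ (Fin.last m)) = fun i => monomial (integralExponent ℓ i) 1 :=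
    funext fun i => (monomial_integralExponent ℓ i).symm
  simp only [hb, hφ]
  refine ⟨⟨fun j => pbr_linVFP_diagonal_Qvf _ j, fun g hg => ?_, fun φ _ h i => ?_⟩,
    fun ⟨hlast, hcast⟩ => ⟨?_, fun i => ?_, fun ψ hψ => ?_⟩⟩
  · refine exists_eq_mul_X_of_pbr_linVFP_diagonal_eq_zero _ (fun i d hd => ?_) hg
    rw [weight_intCast, Int.cast_inj] at hd
    exact ne_zero_of_weight_cofactorWeight_eq hcop' (hℓ i) (Int.isUnit_iff.2 (hε i)) hd
  · exact (mul_eq_zero.1 (h i)).resolve_right (X_ne_zero i)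
  · exact algebraicIndependent_monomial_one
      (linearCombination_integralExponent_injective ℓ fun i => hℓ0 _)
  · rw [← monomial_integralExponent, lieDP_linVFP_diagonal_monomial, weight_intCast,
      weight_cofactorWeight_integralExponent hlast (hcast i), Int.cast_zero, zero_mul,
      monomial_zero]
  · rw [lieDP_linVFP_diagonal_eq_zero_iff] at hψ
    refine mem_adjoin_range_monomial_one fun d hd => ?_
    have hd0 := hψ hd
    rw [weight_intCast, Int.cast_eq_zero] at hd0
    exact mem_range_integralExponent_of_weight_eq_zero hcop' hℓ0 hlast hcast hd0
end

section
/- Let f = A_s + ⋯ be a formal vector field on ℂⁿ in Poincaré–Dulac normal form. Then: (a) the divergence div f = tr Df is a formal first integral of the linear vector field A_s, i.e. X_{A_s}(div f) = 0; (b) if ψ is a formal inverse Jacobi multiplier of f (i.e. X_f(ψ) = div f · ψ), then X_{A_s}(ψ) = (div A_s)·ψ. -/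
/-!
(a) For arbitrary formal vector fields `div [g, h] = X_g (div h) - X_h (div g)`. For `g = A_s x`
the divergence is the constant `tr A_s`, so `[A_s, f] = 0` gives `X_{A_s} (div f) = 0`.

(b) By (a) and `[A_s, f] = 0`, the operator `L = X_{A_s} - tr A_s` maps solutions of
`X_f ψ = div f · ψ` to solutions. We show `L ψ = 0` degree by degree. If `L ψ` has no terms of
degree `< d`, neither has any `L^k ψ` with `k ≥ 1`, and comparing degree-`d` parts in the equation
for such a solution gives `X_A = tr A = tr A_s` there, i.e. `L = -X_{A_n}`. Hence `L^k` acts as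
`(-X_{A_n})^k` on the degree-`d` part `v` of `L ψ`. As `A_n` is nilpotent, the derivation
`X_{A_n}` is locally nilpotent on polynomials, so `L^(k+1) u = L^k v = 0` for the degree-`d` part
`u` of `ψ` and `k` large. As `A_s` is diagonalizable, the linear forms have a basis of
eigenvectors of the derivation `X_{A_s}`, so every polynomial is a sum of eigenvectors; therefore
`L^(k+1) u = 0` forces `L u = 0`, i.e. `v = 0`.
-/

open Finset

/-- Coefficient-wise partial derivative of a multivariate formal power series. -/
noncomputable def psD {n : ℕ} (i : Fin n) (φ : MvPowerSeries (Fin n) ℂ) :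
    MvPowerSeries (Fin n) ℂ :=
  fun m => ((m i : ℂ) + 1) * MvPowerSeries.coeff (R := ℂ) (m + Finsupp.single i 1) φ

/-- Formal vector fields on ℂⁿ. -/
abbrev FVF (n : ℕ) := Fin n → MvPowerSeries (Fin n) ℂ

/-- Lie derivative `X_g(φ)`. -/
noncomputable def lieD {n : ℕ} (g : FVF n) (φ : MvPowerSeries (Fin n) ℂ) :
    MvPowerSeries (Fin n) ℂ :=
  ∑ j, g j * psD j φ

/-- Lie bracket `[g,h] = Dh·g − Dg·h`. -/
noncomputable def fbr {n : ℕ} (g h : FVF n) : FVF n :=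
  fun i => lieD g (h i) - lieD h (g i)

/-- The linear vector field `x ↦ Ax`. -/
noncomputable def linVF {n : ℕ} (A : Matrix (Fin n) (Fin n) ℂ) : FVF n :=
  fun i => ∑ j, MvPowerSeries.C (σ := Fin n) (R := ℂ) (A i j) * MvPowerSeries.X j

/-- `f` vanishes at `0` and has linear part `A`. -/
def hasLin {n : ℕ} (f : FVF n) (A : Matrix (Fin n) (Fin n) ℂ) : Prop :=
  (∀ i, MvPowerSeries.coeff (R := ℂ) 0 (f i) = 0) ∧
  ∀ i j, MvPowerSeries.coeff (R := ℂ) (Finsupp.single j 1) (f i) = A i j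

/-- Multiplication of a vector field by a scalar formal power series. -/
noncomputable def psSMul {n : ℕ} (φ : MvPowerSeries (Fin n) ℂ) (f : FVF n) : FVF n :=
  fun i => φ * f i

/-- A formal power series is constant. -/
def constPS {n : ℕ} (φ : MvPowerSeries (Fin n) ℂ) : Prop :=
  ∀ m : Fin n →₀ ℕ, m ≠ 0 → MvPowerSeries.coeff (R := ℂ) m φ = 0

/-- A matrix is diagonalizable (semisimple). -/
def IsDiagonalizable {n : ℕ} (M : Matrix (Fin n) (Fin n) ℂ) : Prop :=
  ∃ P : Matrix (Fin n) (Fin n) ℂ, IsUnit P ∧ (P⁻¹ * M * P).IsDiag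

/-- Dimension of the space of matrices commuting with `A`. -/
noncomputable def matCentDim {n : ℕ} (A : Matrix (Fin n) (Fin n) ℂ) : ℕ :=
  Module.finrank ℂ (Subalgebra.centralizer ℂ ({A} : Set (Matrix (Fin n) (Fin n) ℂ)))

/-- Linear part (as a matrix) of a formal vector field. -/
noncomputable def linPart {n : ℕ} (h : FVF n) : Matrix (Fin n) (Fin n) ℂ :=
  Matrix.of fun i j => MvPowerSeries.coeff (R := ℂ) (Finsupp.single j 1) (h i)

/-- Divergence of a formal vector field. -/
noncomputable def divPS {n : ℕ} (f : FVF n) : MvPowerSeries (Fin n) ℂ :=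
  ∑ i, psD i (f i)


open MvPowerSeries

theorem Module.End.mem_eigenspace_of_mem_genEigenspace_of_mem_iSup_eigenspace {K V : Type*}
    [Field K] [AddCommGroup V] [Module K V] {f : Module.End K V} {μ : K} {k : ℕ∞} {v : V}
    (hv : v ∈ ⨆ ν, f.eigenspace ν) (hk : v ∈ f.genEigenspace μ k) : v ∈ f.eigenspace μ := by
  have hle : ∀ ν, f.eigenspace ν ≤ f.genEigenspace ν ⊤ := fun ν =>
    (f.eigenspace_le_genEigenspace one_pos).trans ((f.genEigenspace ν).monotone le_top)
  rw [iSup_split_single _ μ, Submodule.mem_sup] at hv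
  obtain ⟨a, ha, b, hb, rfl⟩ := hv
  suffices b = 0 by rwa [this, add_zero]
  refine Submodule.disjoint_def.mp (f.independent_genEigenspace ⊤ μ) b ?_ ?_
  · simpa using sub_mem ((f.genEigenspace μ).monotone le_top hk) (hle μ ha)
  · exact iSup₂_mono (fun ν _ => hle ν) hb

theorem Matrix.IsDiag.vecMul_inv_row {R ι : Type*} [CommRing R] [Fintype ι] [DecidableEq ι]
    {B P : Matrix ι ι R} (hP : IsUnit P) (hdiag : (P⁻¹ * B * P).IsDiag) (i : ι) :
    Matrix.vecMul (P⁻¹ i) B = (P⁻¹ * B * P) i i • P⁻¹ i := by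
  have hPP : P * P⁻¹ = 1 := Matrix.mul_nonsing_inv P ((Matrix.isUnit_iff_isUnit_det P).mp hP)
  ext k
  have hconj := congrFun (congrFun (show P⁻¹ * B = (P⁻¹ * B * P) * P⁻¹ by
    rw [Matrix.mul_assoc _ P, hPP, Matrix.mul_one]) i) k
  rw [Matrix.mul_apply, Matrix.mul_apply, Fintype.sum_eq_single (f := fun l =>
    (P⁻¹ * B * P) i l * P⁻¹ l k) i (fun l hl => by rw [hdiag hl.symm, zero_mul])] at hconj
  simpa [Matrix.vecMul, dotProduct] using hconj

theorem Finsupp.exists_eq_single_of_degree_eq_one {σ : Type*} {m : σ →₀ ℕ} (h : m.degree = 1) :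
    ∃ k, m = Finsupp.single k 1 := by
  obtain ⟨k, hk⟩ : ∃ k, m k ≠ 0 := by
    by_contra! h0
    simp [show m = 0 from Finsupp.ext h0] at h
  have hle : Finsupp.single k 1 ≤ m := Finsupp.single_le_iff.mpr (Nat.one_le_iff_ne_zero.mpr hk)
  have hrest : (m - Finsupp.single k 1).degree = 0 := by
    have := congrArg Finsupp.degree (tsub_add_cancel_of_le hle)
    rw [map_add, Finsupp.degree_single] at this
    omega
  refine ⟨k, ?_⟩
  rw [← tsub_add_cancel_of_le hle, (Finsupp.degree_eq_zero_iff _).mp hrest, zero_add]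

namespace Derivation

variable {R A : Type*} [CommRing R] [CommRing A] [Algebra R A] (D : Derivation R A A)

theorem mul_mem_eigenspace_add {μ ν : R} {a b : A}
    (ha : a ∈ Module.End.eigenspace (D : Module.End R A) μ)
    (hb : b ∈ Module.End.eigenspace (D : Module.End R A) ν) :
    a * b ∈ Module.End.eigenspace (D : Module.End R A) (μ + ν) := by
  rw [Module.End.mem_eigenspace_iff, coeFn_coe] at *
  rw [D.leibniz, ha, hb, smul_eq_mul, smul_eq_mul, mul_smul_comm, mul_smul_comm, mul_comm b a,
    add_smul, add_comm]

noncomputable def eigenSubalgebra : Subalgebra R A :=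
  (⨆ μ, Module.End.eigenspace (D : Module.End R A) μ).toSubalgebra
    (Submodule.mem_iSup_of_mem 0 (by simp))
    fun a b ha hb => by
      have hmul : (⨆ μ, Module.End.eigenspace (D : Module.End R A) μ) *
          (⨆ ν, Module.End.eigenspace (D : Module.End R A) ν) ≤
            ⨆ μ, Module.End.eigenspace (D : Module.End R A) μ := by
        simp only [Submodule.iSup_mul, Submodule.mul_iSup, iSup_le_iff, Submodule.mul_le]
        exact fun _ _ _ ha _ hb => Submodule.mem_iSup_of_mem _ (D.mul_mem_eigenspace_add ha hb)
      exact hmul (Submodule.mul_mem_mul ha hb)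

theorem pow_apply_mul_eq_zero :
    ∀ (k l : ℕ) {a b : A}, ((D : Module.End R A) ^ k) a = 0 → ((D : Module.End R A) ^ l) b = 0 →
      ((D : Module.End R A) ^ (k + l)) (a * b) = 0
  | 0, l, a, b, ha, _ => by simp_all
  | k + 1, 0, a, b, _, hb => by simp_all
  | k + 1, l + 1, a, b, ha, hb => by
    have ha' : ((D : Module.End R A) ^ k) (D a) = 0 := by
      rwa [pow_succ, Module.End.mul_apply] at ha
    have hb' : ((D : Module.End R A) ^ l) (D b) = 0 := by
      rwa [pow_succ, Module.End.mul_apply] at hb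
    have h1 := pow_apply_mul_eq_zero (k + 1) l ha hb'
    have h2 := pow_apply_mul_eq_zero k (l + 1) ha' hb
    rw [show k + 1 + (l + 1) = k + 1 + l + 1 by omega, pow_succ, Module.End.mul_apply, coeFn_coe,
      D.leibniz, smul_eq_mul, smul_eq_mul, map_add, h1, mul_comm b,
      show k + 1 + l = k + (l + 1) by omega, h2, add_zero]
  termination_by k l => k + l

noncomputable def locallyNilpotentSubalgebra : Subalgebra R A where
  carrier := {a | ∃ k, ((D : Module.End R A) ^ k) a = 0}
  mul_mem' := fun ⟨k, ha⟩ ⟨l, hb⟩ => ⟨k + l, D.pow_apply_mul_eq_zero k l ha hb⟩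
  add_mem' := by
    rintro a b ⟨k, ha⟩ ⟨l, hb⟩
    refine ⟨k + l, ?_⟩
    rw [map_add, pow_add, Module.End.mul_apply, Module.End.mul_apply, hb, map_zero, add_zero,
      ← Module.End.mul_apply, ← pow_add, add_comm, pow_add, Module.End.mul_apply, ha, map_zero]
  algebraMap_mem' r := ⟨1, by simp⟩

end Derivation

namespace MvPowerSeries

variable {σ R : Type*} [CommSemiring R]

theorem pderiv_pderiv_comm (i j : σ) (φ : MvPowerSeries σ R) :
    pderiv R i (pderiv R j φ) = pderiv R j (pderiv R i φ) := by
  classical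
  rcases eq_or_ne i j with rfl | hij
  · rfl
  ext m
  simp only [coeff_pderiv, Finsupp.add_apply, Finsupp.single_apply, if_neg hij, if_neg hij.symm,
    add_zero]
  rw [add_right_comm m (Finsupp.single i 1)]
  ring

theorem coeff_X_mul (k : σ) (φ : MvPowerSeries σ R) (m : σ →₀ ℕ) :
    coeff m (X k * φ) =
      if Finsupp.single k 1 ≤ m then coeff (m - Finsupp.single k 1) φ else 0 := by
  rw [X_def, coeff_monomial_mul, one_mul]

theorem homogeneousComponent_X_mul_pderiv (d : ℕ) (k j : σ) (φ : MvPowerSeries σ R) :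
    homogeneousComponent d (X k * pderiv R j φ) =
      X k * pderiv R j (homogeneousComponent d φ) := by
  classical
  ext m
  rw [coeff_homogeneousComponent, coeff_X_mul, coeff_X_mul]
  by_cases hk : Finsupp.single k 1 ≤ m
  · have hdeg : (m - Finsupp.single k 1 + Finsupp.single j 1).degree = m.degree := by
      conv_rhs => rw [← tsub_add_cancel_of_le hk]
      simp only [map_add, Finsupp.degree_single]
    simp only [if_pos hk, coeff_pderiv, coeff_homogeneousComponent, hdeg]
    split_ifs <;> simp
  · simp [hk]

theorem homogeneousComponent_zero (φ : MvPowerSeries σ R) :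
    homogeneousComponent 0 φ = C (constantCoeff φ) := by
  classical
  ext m
  rw [← coeff_zero_eq_constantCoeff_apply]
  by_cases h : m = 0 <;>
    simp only [h, coeff_homogeneousComponent, coeff_C, Finsupp.degree_eq_zero_iff, if_true,
      if_false]

theorem le_order_pderiv {φ : MvPowerSeries σ R} {d : ℕ} (hd : (d : ℕ∞) ≤ φ.order) (i : σ) :
    ((d - 1 : ℕ) : ℕ∞) ≤ (pderiv R i φ).order := by
  refine le_order fun m hm => ?_
  rw [coeff_pderiv, coeff_of_lt_order, zero_mul]
  rw [map_add, Finsupp.degree_single]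
  have hm : m.degree < d - 1 := by exact_mod_cast hm
  exact lt_of_lt_of_le (by exact_mod_cast (by omega : m.degree + 1 < d)) hd

theorem le_order_of_homogeneousComponent_eq_zero {φ : MvPowerSeries σ R} {d : ℕ}
    (h : ∀ e < d, homogeneousComponent e φ = 0) : (d : ℕ∞) ≤ φ.order := by
  refine le_order fun m hm => ?_
  simpa [coeff_homogeneousComponent] using
    congrArg (coeff m) (h m.degree (by exact_mod_cast hm))

theorem eq_zero_of_homogeneousComponent_eq_zero {φ : MvPowerSeries σ R}
    (h : ∀ d, homogeneousComponent d φ = 0) : φ = 0 := by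
  ext m
  simpa [coeff_homogeneousComponent] using congrArg (coeff m) (h m.degree)

variable (σ R) in
noncomputable def polynomialSubalgebra : Subalgebra R (MvPowerSeries σ R) :=
  (MvPolynomial.coeToMvPowerSeries.algHom R).range

theorem polynomialSubalgebra_le {S : Subalgebra R (MvPowerSeries σ R)} (hS : ∀ j, X j ∈ S) :
    polynomialSubalgebra σ R ≤ S := by
  rw [polynomialSubalgebra, ← Algebra.map_top, ← MvPolynomial.adjoin_range_X (R := R) (σ := σ),
    AlgHom.map_adjoin, Algebra.adjoin_le_iff]
  rintro _ ⟨_, ⟨j, rfl⟩, rfl⟩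
  simpa using hS j

theorem homogeneousComponent_mem_polynomialSubalgebra [Fintype σ] (d : ℕ)
    (φ : MvPowerSeries σ R) : homogeneousComponent d φ ∈ polynomialSubalgebra σ R := by
  classical
  refine ⟨∑ m ∈ Finset.univ.finsuppAntidiag d, MvPolynomial.monomial m (coeff m φ), ?_⟩
  ext m
  simp [coeff_homogeneousComponent, coeff_monomial, Finset.mem_finsuppAntidiag,
    Finsupp.degree_eq_sum]

end MvPowerSeries

section VectorFields

variable {n : ℕ}

theorem psD_eq_pderiv (i : Fin n) (φ : MvPowerSeries (Fin n) ℂ) : psD i φ = pderiv ℂ i φ := by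
  ext m
  rw [coeff_pderiv, mul_comm]
  rfl

theorem lieD_eq_sum_pderiv (g : FVF n) (φ : MvPowerSeries (Fin n) ℂ) :
    lieD g φ = ∑ j, g j * pderiv ℂ j φ := by
  simp only [lieD, psD_eq_pderiv]

theorem divPS_eq_sum_pderiv (f : FVF n) : divPS f = ∑ i, pderiv ℂ i (f i) := by
  simp only [divPS, psD_eq_pderiv]

noncomputable def lieDeriv (g : FVF n) :
    Derivation ℂ (MvPowerSeries (Fin n) ℂ) (MvPowerSeries (Fin n) ℂ) :=
  ∑ j, g j • pderiv ℂ j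

theorem lieDeriv_apply (g : FVF n) (φ : MvPowerSeries (Fin n) ℂ) :
    lieDeriv g φ = lieD g φ := by
  rw [lieD_eq_sum_pderiv, lieDeriv, ← Derivation.coeFnAddMonoidHom_apply, map_sum,
    Finset.sum_apply]
  rfl

noncomputable def lieEnd (g : FVF n) : Module.End ℂ (MvPowerSeries (Fin n) ℂ) := lieDeriv g

theorem lieEnd_apply (g : FVF n) (φ : MvPowerSeries (Fin n) ℂ) : lieEnd g φ = lieD g φ :=
  lieDeriv_apply g φ

theorem lieD_sub (g : FVF n) (φ ψ : MvPowerSeries (Fin n) ℂ) :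
    lieD g (φ - ψ) = lieD g φ - lieD g ψ := by
  simp only [← lieDeriv_apply, map_sub]

theorem lieD_sum {ι : Type*} (g : FVF n) (s : Finset ι) (F : ι → MvPowerSeries (Fin n) ℂ) :
    lieD g (∑ a ∈ s, F a) = ∑ a ∈ s, lieD g (F a) := by
  simp only [← lieDeriv_apply, map_sum]

theorem lieD_mul (g : FVF n) (φ ψ : MvPowerSeries (Fin n) ℂ) :
    lieD g (φ * ψ) = lieD g φ * ψ + φ * lieD g ψ := by
  simp only [← lieDeriv_apply, Derivation.leibniz, smul_eq_mul]
  ring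

theorem lieD_C_mul (g : FVF n) (a : ℂ) (φ : MvPowerSeries (Fin n) ℂ) :
    lieD g (C a * φ) = C a * lieD g φ := by
  simp only [← lieDeriv_apply, ← smul_eq_C_mul, Derivation.map_smul]

theorem lieD_C (g : FVF n) (a : ℂ) : lieD g (C a) = 0 := by
  rw [← lieDeriv_apply]
  exact (lieDeriv g).map_algebraMap a

theorem lieD_zero_left (φ : MvPowerSeries (Fin n) ℂ) : lieD 0 φ = 0 := by
  simp [lieD_eq_sum_pderiv]

theorem lieD_add_left (g h : FVF n) (φ : MvPowerSeries (Fin n) ℂ) :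
    lieD (g + h) φ = lieD g φ + lieD h φ := by
  simp only [lieD_eq_sum_pderiv, Pi.add_apply, add_mul, Finset.sum_add_distrib]

theorem lieD_lieD_eq_sum (g h : FVF n) (φ : MvPowerSeries (Fin n) ℂ) :
    lieD g (lieD h φ) = ∑ k, lieD g (h k) * pderiv ℂ k φ +
      ∑ k, ∑ j, h k * g j * pderiv ℂ j (pderiv ℂ k φ) := by
  conv_lhs => rw [lieD_eq_sum_pderiv h]
  simp only [lieD_sum, lieD_mul, Finset.sum_add_distrib, lieD_eq_sum_pderiv (g := g) (pderiv ℂ _ φ),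
    Finset.mul_sum, mul_assoc]

theorem lieD_fbr (g h : FVF n) (φ : MvPowerSeries (Fin n) ℂ) :
    lieD (fbr g h) φ = lieD g (lieD h φ) - lieD h (lieD g φ) := by
  rw [lieD_lieD_eq_sum, lieD_lieD_eq_sum, Finset.sum_comm (s := Finset.univ) (t := Finset.univ)
    (f := fun k j => g k * h j * pderiv ℂ j (pderiv ℂ k φ))]
  simp only [fbr, lieD_eq_sum_pderiv (fbr g h), sub_mul, Finset.sum_sub_distrib,
    pderiv_pderiv_comm _ (_ : Fin n), mul_comm (h _) (g _)]
  ring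

theorem lieD_comm_of_fbr_eq_zero {g h : FVF n} (hgh : fbr g h = 0) (φ : MvPowerSeries (Fin n) ℂ) :
    lieD g (lieD h φ) = lieD h (lieD g φ) := by
  rw [← sub_eq_zero, ← lieD_fbr, hgh, lieD_zero_left]

theorem sum_pderiv_lieD (g h : FVF n) :
    ∑ i, pderiv ℂ i (lieD g (h i)) =
      ∑ i, ∑ j, pderiv ℂ i (g j) * pderiv ℂ j (h i) + lieD g (divPS h) := by
  simp only [lieD_eq_sum_pderiv, divPS_eq_sum_pderiv, map_sum, Derivation.leibniz, smul_eq_mul,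
    Finset.sum_add_distrib, Finset.mul_sum]
  rw [add_comm, Finset.sum_comm (s := Finset.univ) (t := Finset.univ)
    (f := fun i j => g j * pderiv ℂ i (pderiv ℂ j (h i)))]
  simp only [pderiv_pderiv_comm _ (_ : Fin n), mul_comm (pderiv ℂ _ (g _))]

theorem divPS_fbr (g h : FVF n) :
    divPS (fbr g h) = lieD g (divPS h) - lieD h (divPS g) := by
  rw [divPS_eq_sum_pderiv]
  simp only [fbr, map_sub, Finset.sum_sub_distrib, sum_pderiv_lieD]
  rw [Finset.sum_comm (s := Finset.univ) (t := Finset.univ)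
    (f := fun i j => pderiv ℂ i (h j) * pderiv ℂ j (g i))]
  simp only [mul_comm (pderiv ℂ _ (h _))]
  ring

noncomputable def linForm : (Fin n → ℂ) →ₗ[ℂ] MvPowerSeries (Fin n) ℂ where
  toFun v := ∑ j, C (v j) * X j
  map_add' v w := by simp only [Pi.add_apply, map_add, add_mul, Finset.sum_add_distrib]
  map_smul' a v := by
    simp only [Pi.smul_apply, smul_eq_mul, map_mul, smul_eq_C_mul, RingHom.id_apply,
      Finset.mul_sum, mul_assoc]

theorem linForm_apply (v : Fin n → ℂ) : linForm v = ∑ j, C (v j) * X j := rfl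

theorem linVF_apply (B : Matrix (Fin n) (Fin n) ℂ) (i : Fin n) : linVF B i = linForm (B i) := rfl

theorem linVF_add (B B' : Matrix (Fin n) (Fin n) ℂ) : linVF (B + B') = linVF B + linVF B' := by
  ext1 i
  simp only [linVF_apply, Pi.add_apply, ← map_add]
  rfl

theorem linForm_single (j : Fin n) : linForm (Pi.single j 1) = X j := by
  classical
  simp [linForm_apply, Pi.single_apply]

theorem pderiv_linForm (i : Fin n) (v : Fin n → ℂ) : pderiv ℂ i (linForm v) = C (v i) := by
  classical
  simp [linForm_apply, pderiv_X, Pi.single_apply]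

theorem coeff_linForm (v : Fin n → ℂ) (m : Fin n →₀ ℕ) :
    coeff m (linForm v) = ∑ k, if m = Finsupp.single k 1 then v k else 0 := by
  classical
  simp [linForm_apply, coeff_X]

theorem lieD_linForm (g : FVF n) (v : Fin n → ℂ) : lieD g (linForm v) = ∑ k, C (v k) * g k := by
  simp only [lieD_eq_sum_pderiv, pderiv_linForm, mul_comm]

theorem lieD_linVF_linForm (B : Matrix (Fin n) (Fin n) ℂ) (v : Fin n → ℂ) :
    lieD (linVF B) (linForm v) = linForm (Matrix.vecMul v B) := by
  rw [lieD_linForm]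
  simp only [linVF_apply, linForm_apply, Finset.mul_sum, ← mul_assoc, ← map_mul]
  rw [Finset.sum_comm]
  simp only [Matrix.vecMul, dotProduct, map_sum, Finset.sum_mul]

theorem pow_lieEnd_linVF_linForm (B : Matrix (Fin n) (Fin n) ℂ) (v : Fin n → ℂ) (k : ℕ) :
    (lieEnd (linVF B) ^ k) (linForm v) = linForm (Matrix.vecMul v (B ^ k)) := by
  induction k with
  | zero => simp
  | succ k ih =>
    rw [pow_succ', Module.End.mul_apply, ih, lieEnd_apply, lieD_linVF_linForm,
      Matrix.vecMul_vecMul, pow_succ]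

theorem divPS_linVF (B : Matrix (Fin n) (Fin n) ℂ) : divPS (linVF B) = C B.trace := by
  simp [divPS_eq_sum_pderiv, linVF_apply, pderiv_linForm, Matrix.trace]

theorem lieD_linVF_divPS_eq_zero {B : Matrix (Fin n) (Fin n) ℂ} {f : FVF n}
    (hf : fbr (linVF B) f = 0) : lieD (linVF B) (divPS f) = 0 := by
  have h := divPS_fbr (linVF B) f
  rw [hf, divPS_linVF, lieD_C, sub_zero] at h
  rw [← h]
  simp [divPS_eq_sum_pderiv]

theorem lieD_sub_C_mul_of_fbr_eq_zero {g f : FVF n} (hgf : fbr g f = 0)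
    (hdiv : lieD g (divPS f) = 0) {φ : MvPowerSeries (Fin n) ℂ} (hφ : lieD f φ = divPS f * φ)
    (c : ℂ) : lieD f (lieD g φ - C c * φ) = divPS f * (lieD g φ - C c * φ) := by
  rw [lieD_sub, lieD_C_mul, ← lieD_comm_of_fbr_eq_zero hgf, hφ, lieD_mul, hdiv]
  ring

theorem lieD_linVF_eq_sum (B : Matrix (Fin n) (Fin n) ℂ) (φ : MvPowerSeries (Fin n) ℂ) :
    lieD (linVF B) φ = ∑ j, ∑ k, C (B j k) * (X k * pderiv ℂ j φ) := by
  simp only [lieD_eq_sum_pderiv, linVF_apply, linForm_apply, Finset.sum_mul, mul_assoc]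

theorem homogeneousComponent_lieD_linVF (d : ℕ) (B : Matrix (Fin n) (Fin n) ℂ)
    (φ : MvPowerSeries (Fin n) ℂ) :
    homogeneousComponent d (lieD (linVF B) φ) = lieD (linVF B) (homogeneousComponent d φ) := by
  simp only [lieD_linVF_eq_sum, map_sum, ← smul_eq_C_mul, LinearMap.map_smul,
    homogeneousComponent_X_mul_pderiv]

theorem two_le_order_sub_linVF {f : FVF n} {A : Matrix (Fin n) (Fin n) ℂ} (hlin : hasLin f A)
    (i : Fin n) : 2 ≤ (f i - linVF A i).order := by
  refine le_order fun m hm => ?_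
  rw [map_sub, linVF_apply, coeff_linForm, sub_eq_zero]
  obtain h0 | h1 : m.degree = 0 ∨ m.degree = 1 := by
    have : m.degree < 2 := by exact_mod_cast hm
    omega
  · rw [(Finsupp.degree_eq_zero_iff _).mp h0, hlin.1, eq_comm]
    exact Finset.sum_eq_zero fun k _ => if_neg (Finsupp.single_ne_zero.mpr one_ne_zero).symm
  · obtain ⟨k, rfl⟩ := Finsupp.exists_eq_single_of_degree_eq_one h1
    rw [hlin.2, Finset.sum_eq_single k] <;> simp +contextual [Finsupp.single_left_inj, eq_comm]

theorem constantCoeff_divPS {f : FVF n} {A : Matrix (Fin n) (Fin n) ℂ} (hlin : hasLin f A) :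
    constantCoeff (divPS f) = A.trace := by
  simp [← coeff_zero_eq_constantCoeff_apply, divPS_eq_sum_pderiv, coeff_pderiv, hlin.2,
    Matrix.trace]

theorem lieD_linVF_homogeneousComponent_of_le_order {f : FVF n} {A : Matrix (Fin n) (Fin n) ℂ}
    (hlin : hasLin f A) {φ : MvPowerSeries (Fin n) ℂ} (hφ : lieD f φ = divPS f * φ) {d : ℕ}
    (hd : (d : ℕ∞) ≤ φ.order) :
    lieD (linVF A) (homogeneousComponent d φ) = C A.trace * homogeneousComponent d φ := by
  -- `f - A x` vanishes to order two, so `X_{f - A x} φ` has no terms of degree `≤ d`.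
  have hrem : homogeneousComponent d (lieD (f - linVF A) φ) = 0 := by
    rw [lieD_eq_sum_pderiv, map_sum]
    refine Finset.sum_eq_zero fun j _ => homogeneousComponent_of_lt_order_eq_zero ?_
    calc (d : ℕ∞) < ((2 + (d - 1) : ℕ) : ℕ∞) := by exact_mod_cast (by omega : d < 2 + (d - 1))
      _ = 2 + ((d - 1 : ℕ) : ℕ∞) := by push_cast; rfl
      _ ≤ (f j - linVF A j).order + (pderiv ℂ j φ).order :=
        add_le_add (two_le_order_sub_linVF hlin j) (le_order_pderiv hd j)
      _ ≤ _ := le_order_mul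
  have hdiv : homogeneousComponent d (divPS f * φ) = C A.trace * homogeneousComponent d φ := by
    simpa [homogeneousComponent_zero, constantCoeff_divPS hlin] using
      homogeneousComponent_mul_of_le_order (f := divPS f) (p := 0) zero_le hd
  have hsplit : lieD f φ = lieD (linVF A) φ + lieD (f - linVF A) φ := by
    rw [← lieD_add_left, add_sub_cancel]
  rw [← homogeneousComponent_lieD_linVF, ← hdiv, ← hφ, hsplit, map_add, hrem, add_zero]

theorem linForm_mem_eigenspace {B : Matrix (Fin n) (Fin n) ℂ} {v : Fin n → ℂ} {μ : ℂ}
    (h : Matrix.vecMul v B = μ • v) :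
    linForm v ∈ (lieEnd (linVF B)).eigenspace μ := by
  rw [Module.End.mem_eigenspace_iff, lieEnd_apply, lieD_linVF_linForm, h, map_smul]

theorem X_mem_eigenSubalgebra {B : Matrix (Fin n) (Fin n) ℂ} (hB : IsDiagonalizable B)
    (j : Fin n) : X j ∈ (lieDeriv (linVF B)).eigenSubalgebra := by
  classical
  obtain ⟨P, hP, hdiag⟩ := hB
  -- The rows of `P⁻¹` are left eigenvectors of `B`, and they span all linear forms.
  have hsingle : Pi.single j 1 = ∑ i, P j i • P⁻¹ i := by
    ext k
    have := congrFun (congrFun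
      (Matrix.mul_nonsing_inv P ((Matrix.isUnit_iff_isUnit_det P).mp hP)) j) k
    rw [Matrix.mul_apply, Matrix.one_apply] at this
    simp [Pi.single_apply, eq_comm, ← this, Finset.sum_apply]
  rw [← linForm_single, hsingle, map_sum]
  refine Subalgebra.sum_mem _ fun i _ => ?_
  rw [map_smul, smul_eq_C_mul]
  exact Subalgebra.mul_mem _ (Subalgebra.algebraMap_mem _ _)
    (Submodule.mem_iSup_of_mem _ (linForm_mem_eigenspace (hdiag.vecMul_inv_row hP i)))

theorem X_mem_locallyNilpotentSubalgebra {B : Matrix (Fin n) (Fin n) ℂ} (hB : IsNilpotent B)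
    (j : Fin n) : X j ∈ (lieDeriv (linVF B)).locallyNilpotentSubalgebra := by
  obtain ⟨r, hr⟩ := hB
  refine ⟨r, show (lieEnd (linVF B) ^ r) (X j) = 0 from ?_⟩
  rw [← linForm_single, pow_lieEnd_linVF_linForm, hr, Matrix.vecMul_zero, map_zero]

noncomputable def lieShift (B : Matrix (Fin n) (Fin n) ℂ) (c : ℂ) :
    Module.End ℂ (MvPowerSeries (Fin n) ℂ) :=
  lieEnd (linVF B) - c • 1

theorem lieShift_apply (B : Matrix (Fin n) (Fin n) ℂ) (c : ℂ) (φ : MvPowerSeries (Fin n) ℂ) :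
    lieShift B c φ = lieD (linVF B) φ - C c * φ := by
  simp [lieShift, lieEnd_apply, smul_eq_C_mul]

theorem commute_homogeneousComponent_lieShift (d : ℕ) (B : Matrix (Fin n) (Fin n) ℂ) (c : ℂ) :
    Commute (homogeneousComponent d) (lieShift B c) := by
  ext1 φ
  simp only [Module.End.mul_apply, lieShift_apply, map_sub, homogeneousComponent_lieD_linVF,
    ← smul_eq_C_mul, LinearMap.map_smul]

theorem lieShift_eq_zero_of_pow_eq_zero {B : Matrix (Fin n) (Fin n) ℂ} (hB : IsDiagonalizable B)
    {u : MvPowerSeries (Fin n) ℂ} (hu : u ∈ polynomialSubalgebra (Fin n) ℂ)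
    {c : ℂ} {k : ℕ} (hk : (lieShift B c ^ k) u = 0) : lieShift B c u = 0 := by
  have hsum : u ∈ ⨆ μ, (lieEnd (linVF B)).eigenspace μ :=
    polynomialSubalgebra_le (X_mem_eigenSubalgebra hB) hu
  have hgen : u ∈ (lieEnd (linVF B)).genEigenspace c k := Module.End.mem_genEigenspace_nat.mpr hk
  have := Module.End.mem_eigenspace_of_mem_genEigenspace_of_mem_iSup_eigenspace hsum hgen
  rwa [Module.End.mem_eigenspace_iff, ← sub_eq_zero] at this

theorem exists_pow_lieEnd_linVF_eq_zero {B : Matrix (Fin n) (Fin n) ℂ} (hB : IsNilpotent B)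
    {u : MvPowerSeries (Fin n) ℂ} (hu : u ∈ polynomialSubalgebra (Fin n) ℂ) :
    ∃ k, (lieEnd (linVF B) ^ k) u = 0 :=
  polynomialSubalgebra_le (X_mem_locallyNilpotentSubalgebra hB) hu

theorem lieD_pow_lieShift_apply {B : Matrix (Fin n) (Fin n) ℂ} {f : FVF n}
    (hf : fbr (linVF B) f = 0) {ψ : MvPowerSeries (Fin n) ℂ} (hψ : lieD f ψ = divPS f * ψ)
    (c : ℂ) (k : ℕ) : lieD f ((lieShift B c ^ k) ψ) = divPS f * (lieShift B c ^ k) ψ := by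
  induction k with
  | zero => exact hψ
  | succ k ih =>
    rw [pow_succ', Module.End.mul_apply, lieShift_apply]
    exact lieD_sub_C_mul_of_fbr_eq_zero hf (lieD_linVF_divPS_eq_zero hf) ih c

theorem lieShift_homogeneousComponent_of_le_order {A As An : Matrix (Fin n) (Fin n) ℂ}
    {f : FVF n} (hA : A = As + An) (hnil : IsNilpotent An) (hlin : hasLin f A)
    {φ : MvPowerSeries (Fin n) ℂ} (hφ : lieD f φ = divPS f * φ) {d : ℕ}
    (hd : (d : ℕ∞) ≤ φ.order) :
    lieShift As As.trace (homogeneousComponent d φ) =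
      -lieEnd (linVF An) (homogeneousComponent d φ) := by
  have h := lieD_linVF_homogeneousComponent_of_le_order hlin hφ hd
  rw [hA, linVF_add, lieD_add_left, Matrix.trace_add,
    (Matrix.isNilpotent_trace_of_isNilpotent hnil).eq_zero, add_zero] at h
  rw [lieShift_apply, lieEnd_apply]
  linear_combination h

theorem homogeneousComponent_lieShift_eq_zero {A As An : Matrix (Fin n) (Fin n) ℂ} {f : FVF n}
    (hA : A = As + An) (hss : IsDiagonalizable As) (hnil : IsNilpotent An) (hlin : hasLin f A)
    (hf : fbr (linVF As) f = 0) {ψ : MvPowerSeries (Fin n) ℂ} (hψ : lieD f ψ = divPS f * ψ)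
    {d : ℕ} (ih : ∀ e < d, homogeneousComponent e (lieShift As As.trace ψ) = 0) :
    homogeneousComponent d (lieShift As As.trace ψ) = 0 := by
  set L := lieShift As As.trace
  set v := homogeneousComponent d (L ψ)
  have hcomm : ∀ e k φ, homogeneousComponent e ((L ^ k) φ) = (L ^ k) (homogeneousComponent e φ) :=
    fun e k => LinearMap.congr_fun ((commute_homogeneousComponent_lieShift e As _).pow_right k).eq
  have horbit : ∀ k, (L ^ k) v = (-1 : ℂ) ^ k • (lieEnd (linVF An) ^ k) v := by
    intro k
    induction k with
    | zero => simp
    | succ k ihk =>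
      have hord : (d : ℕ∞) ≤ ((L ^ (k + 1)) ψ).order :=
        le_order_of_homogeneousComponent_eq_zero fun e he => by
          rw [pow_succ, Module.End.mul_apply, hcomm, ih e he, map_zero]
      have hL := lieShift_homogeneousComponent_of_le_order hA hnil hlin
        (lieD_pow_lieShift_apply hf hψ _ (k + 1)) hord
      rw [pow_succ, Module.End.mul_apply, hcomm] at hL
      rw [pow_succ', Module.End.mul_apply, hL, ihk, map_smul]
      simp [pow_succ', Module.End.mul_apply]
  obtain ⟨K, hK⟩ := exists_pow_lieEnd_linVF_eq_zero hnil
    (homogeneousComponent_mem_polynomialSubalgebra d (L ψ))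
  have hv : v = L (homogeneousComponent d ψ) := by simpa using hcomm d 1 ψ
  rw [hv]
  refine lieShift_eq_zero_of_pow_eq_zero hss (homogeneousComponent_mem_polynomialSubalgebra d ψ)
    (k := K + 1) ?_
  rw [pow_succ, Module.End.mul_apply, ← hv, horbit, hK, smul_zero]

theorem lieD_linVF_eq_C_trace_mul {A As An : Matrix (Fin n) (Fin n) ℂ} {f : FVF n}
    (hA : A = As + An) (hss : IsDiagonalizable As) (hnil : IsNilpotent An) (hlin : hasLin f A)
    (hf : fbr (linVF As) f = 0) {ψ : MvPowerSeries (Fin n) ℂ} (hψ : lieD f ψ = divPS f * ψ) :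
    lieD (linVF As) ψ = C As.trace * ψ := by
  have h : lieShift As As.trace ψ = 0 := eq_zero_of_homogeneousComponent_eq_zero fun d => by
    induction d using Nat.strong_induction_on with
    | _ d ih => exact homogeneousComponent_lieShift_eq_zero hA hss hnil hlin hf hψ ih
  rwa [lieShift_apply, sub_eq_zero] at h

end VectorFields

theorem stmt_18_general {n : ℕ} (A As An : Matrix (Fin n) (Fin n) ℂ)
    (hJC : A = As + An) (hss : IsDiagonalizable As) (hnil : IsNilpotent An)
    (f : FVF n) (hlin : hasLin f A) (hPDNF : fbr (linVF As) f = 0) :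
    lieD (linVF As) (divPS f) = 0 ∧
    ∀ ψ : MvPowerSeries (Fin n) ℂ, ψ ≠ 0 → lieD f ψ = divPS f * ψ →
      lieD (linVF As) ψ = MvPowerSeries.C (σ := Fin n) (R := ℂ) (Matrix.trace As) * ψ :=
  ⟨lieD_linVF_divPS_eq_zero hPDNF,
    fun _ _ hψ => lieD_linVF_eq_C_trace_mul hJC hss hnil hlin hPDNF hψ⟩

/-- For `f = A_s + ⋯` in Poincaré–Dulac normal form:
(a) `div f` is a formal first integral of `A_s`;
(b) any formal inverse Jacobi multiplier `ψ` of `f` satisfies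
`X_{A_s}(ψ) = (div A_s)·ψ`. -/
theorem stmt_18 {n : ℕ} (A As An : Matrix (Fin n) (Fin n) ℂ)
    (hJC : A = As + An) (hss : IsDiagonalizable As) (hnil : IsNilpotent An)
    (hcomm : As * An = An * As)
    (f : FVF n) (hlin : hasLin f A) (hPDNF : fbr (linVF As) f = 0) :
    lieD (linVF As) (divPS f) = 0 ∧
    ∀ ψ : MvPowerSeries (Fin n) ℂ, ψ ≠ 0 → lieD f ψ = divPS f * ψ →
      lieD (linVF As) ψ = MvPowerSeries.C (σ := Fin n) (R := ℂ) (Matrix.trace As) * ψ :=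
  stmt_18_general A As An hJC hss hnil f hlin hPDNF
end
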